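/- Let G be a finite group, V an abelian normal subgroup, H ≤ G with G = HV, and suppose [H,V] is a proper subgroup of V while N_V(H) ≤ [H,V]. Then H is not pronormal in G. -/

import Mathlib

open scoped Pointwise commutatorElement

/-!
Put `N = [H, V]` and pick `v ∈ V \ N`. Since `v h v⁻¹ = [v, h] h`, conjugation by `v` moves `H`
into `N ⊔ H`, and `H` normalizes `N`, so `N ⊔ H = N * H`. Pronormality therefore yields `u ∈ N`
with `H^u = H^v`. Then `v⁻¹ u ∈ V` normalizes `H`, hence lies in `N_V(H) ≤ N`, which forces
`v ∈ N`.
-/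

/-- The conjugate subgroup `H^g = g H g⁻¹` (conjugation by `g`). -/
def conjSub {G : Type*} [Group G] (g : G) (H : Subgroup G) : Subgroup G :=
  H.map (MulAut.conj g).toMonoidHom

/-- A subgroup `H` of `G` is pronormal in `G` if for every `g ∈ G` the subgroups `H` and
`H^g` are conjugate by an element of `⟨H, H^g⟩`. -/
def IsPronormal {G : Type*} [Group G] (H : Subgroup G) : Prop :=
  ∀ g : G, ∃ x ∈ H ⊔ conjSub g H, conjSub x H = conjSub g H

namespace Subgroup

variable {G : Type*} [Group G]

lemma mem_conjSub {g x : G} {K : Subgroup G} : x ∈ conjSub g K ↔ g⁻¹ * x * g ∈ K := by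
  rw [conjSub, mem_map_equiv]
  simp [mul_assoc]

lemma conjSub_mul (a b : G) (K : Subgroup G) :
    conjSub (a * b) K = conjSub a (conjSub b K) := by
  ext x
  simp only [mem_conjSub, mul_inv_rev, mul_assoc]

lemma conjSub_eq_self_iff {g : G} {K : Subgroup G} :
    conjSub g K = K ↔ g ∈ normalizer (K : Set G) :=
  mem_normalizer_iff_map_conj_eq.symm

lemma inv_mul_mem_normalizer_of_conjSub_eq {a b : G} {K : Subgroup G}
    (h : conjSub a K = conjSub b K) : a⁻¹ * b ∈ normalizer (K : Set G) := by
  rw [← conjSub_eq_self_iff, conjSub_mul, ← h, ← conjSub_mul, inv_mul_cancel,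
    conjSub_eq_self_iff.mpr (one_mem _)]

lemma conjSub_le_commutator_sup {H K : Subgroup G} {g : G} (hg : g ∈ K) :
    conjSub g H ≤ ⁅H, K⁆ ⊔ H := by
  intro y hy
  rw [mem_conjSub] at hy
  have hcomm : ⁅g, g⁻¹ * y * g⁆ ∈ ⁅H, K⁆ := by
    rw [commutator_comm]
    exact commutator_mem_commutator hg hy
  have hy_eq : y = ⁅g, g⁻¹ * y * g⁆ * (g⁻¹ * y * g) := by group
  rw [hy_eq]
  exact mul_mem (mem_sup_left hcomm) (mem_sup_right hy)

end Subgroup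

open Subgroup

lemma IsPronormal.exists_mem_commutator_conjSub_eq {G : Type*} [Group G] {H K : Subgroup G}
    (hH : IsPronormal H) {g : G} (hg : g ∈ K) : ∃ u ∈ ⁅H, K⁆, conjSub u H = conjSub g H := by
  obtain ⟨x, hx, hconj⟩ := hH g
  have hx' : x ∈ ((⁅H, K⁆ ⊔ H : Subgroup G) : Set G) :=
    sup_le le_sup_right (conjSub_le_commutator_sup hg) hx
  rw [coe_mul_of_right_le_normalizer_left _ _ (normalizer_commutator_ge_left H K)] at hx'
  obtain ⟨u, hu, h, hh, rfl⟩ := hx'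
  refine ⟨u, hu, ?_⟩
  rw [← hconj, conjSub_mul, conjSub_eq_self_iff.mpr (le_normalizer hh)]

theorem stmt15_general {G : Type*} [Group G] (H V : Subgroup G)
    (hlt : ⁅H, V⁆ < V) (hN : V ⊓ Subgroup.normalizer (H : Set G) ≤ ⁅H, V⁆) :
    ¬ IsPronormal H := by
  intro hH
  obtain ⟨v, hvV, hvN⟩ := SetLike.exists_of_lt hlt
  obtain ⟨u, hu, hconj⟩ := hH.exists_mem_commutator_conjSub_eq hvV
  have hvu : v⁻¹ * u ∈ ⁅H, V⁆ :=
    hN (mem_inf.mpr ⟨mul_mem (inv_mem hvV) (hlt.le hu),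
      inv_mul_mem_normalizer_of_conjSub_eq hconj.symm⟩)
  apply hvN
  simpa using mul_mem hu (inv_mem hvu)

/-- Let `V` be an abelian normal subgroup of a finite group `G` with
`G = HV`. If `[H, V] < V` and `N_V(H) ≤ [H, V]`, then `H` is not pronormal in `G`. -/
theorem stmt15 {G : Type*} [Group G] [Finite G] (H V : Subgroup G) [V.Normal]
    (hab : ∀ x ∈ V, ∀ y ∈ V, x * y = y * x) (hG : H ⊔ V = ⊤)
    (hlt : ⁅H, V⁆ < V) (hN : V ⊓ Subgroup.normalizer (H : Set G) ≤ ⁅H, V⁆) :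
    ¬ IsPronormal H :=
  stmt15_general H V hlt hN
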